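/- For the recursive circulant G(r·3^m, 3) with r ∈ {1,2} and m ≥ 1, rc(G(r·3^m,3)) = src(G(r·3^m,3)) = m + ⌊r/2⌋. -/

import Mathlib

open SimpleGraph Finset

/-- An edge-coloring with colors `< k` such that every two vertices are joined by a
path whose edge colors are pairwise distinct. -/
def RainbowConnected {V : Type*} (G : SimpleGraph V) (k : ℕ) : Prop :=
  ∃ c : Sym2 V → ℕ, (∀ e ∈ G.edgeSet, c e < k) ∧
    ∀ u v : V, ∃ p : G.Walk u v, p.IsPath ∧ (p.edges.map c).Nodup

/-- As above, but the rainbow path must be a geodesic. -/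
def StrongRainbowConnected {V : Type*} (G : SimpleGraph V) (k : ℕ) : Prop :=
  ∃ c : Sym2 V → ℕ, (∀ e ∈ G.edgeSet, c e < k) ∧
    ∀ u v : V, ∃ p : G.Walk u v, p.IsPath ∧ p.length = G.dist u v ∧ (p.edges.map c).Nodup

/-- The rainbow connection number. -/
noncomputable def rc {V : Type*} (G : SimpleGraph V) : ℕ := sInf {k | RainbowConnected G k}

/-- The strong rainbow connection number. -/
noncomputable def src {V : Type*} (G : SimpleGraph V) : ℕ := sInf {k | StrongRainbowConnected G k}
/-- The recursive circulant `G(N,d)`: the circulant graph on `ZMod N` with jumps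
`±d^i` for `0 ≤ i ≤ ⌈log_d N⌉ - 1`. -/
def recCirc (N d : ℕ) : SimpleGraph (ZMod N) :=
  SimpleGraph.circulantGraph {x : ZMod N | ∃ i < Nat.clog d N, x = (d : ZMod N) ^ i}

/-- The value of a step: `(j, true)` is `+d^j` and `(j, false)` is `-d^j`. -/
def stepVal (N d : ℕ) (p : ℕ × Bool) : ZMod N :=
  if p.2 then (d : ZMod N) ^ p.1 else -((d : ZMod N) ^ p.1)

/-!
Every edge of `G(N, 3)` is a step `±3 ^ i` with `i < M = m + r - 1 = ⌈log₃ N⌉`. The distance from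
`u` to `v` is the balanced ternary weight of `v - u` modulo `N` (number of nonzero digits, the
leading one taken modulo `2` when `r = 2`): the expansion itself is a walk of that length, and one
step `±3 ^ i` changes the weight by at most one. Coloring the edge `{u, u ± 3 ^ i}` by `i` makes
the expansion walk rainbow, since its exponents are distinct, so `M` colors give rainbow geodesics.
Conversely `(3 ^ M - 1) / 2 = 11…1₃` has weight `M`, so any rainbow path from `0` to it needs `M`
colors.
-/

section Rainbow

variable {V : Type*} {G : SimpleGraph V} {k : ℕ}

theorem StrongRainbowConnected.rainbowConnected (h : StrongRainbowConnected G k) :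
    RainbowConnected G k := by
  obtain ⟨c, hc, hpath⟩ := h
  exact ⟨c, hc, fun u v => by obtain ⟨p, hp, -, hnd⟩ := hpath u v; exact ⟨p, hp, hnd⟩⟩

theorem RainbowConnected.exists_walk_length_le (h : RainbowConnected G k) (u v : V) :
    ∃ p : G.Walk u v, p.length ≤ k := by
  obtain ⟨c, hc, hpath⟩ := h
  obtain ⟨p, -, hnd⟩ := hpath u v
  refine ⟨p, ?_⟩
  have hsub : (p.edges.map c).toFinset ⊆ Finset.range k := by
    intro n hn
    obtain ⟨e, he, rfl⟩ := List.mem_map.mp (List.mem_toFinset.mp hn)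
    exact Finset.mem_range.mpr (hc e (p.edges_subset_edgeSet he))
  simpa [List.toFinset_card_of_nodup hnd] using Finset.card_le_card hsub

theorem rc_eq_and_src_eq_of_le_length (hs : StrongRainbowConnected G k) {u v : V}
    (hlen : ∀ p : G.Walk u v, k ≤ p.length) : rc G = k ∧ src G = k := by
  have hlower (j : ℕ) (hj : RainbowConnected G j) : k ≤ j := by
    obtain ⟨p, hp⟩ := hj.exists_walk_length_le u v
    exact (hlen p).trans hp
  exact ⟨le_antisymm (Nat.sInf_le hs.rainbowConnected) (le_csInf ⟨k, hs.rainbowConnected⟩ hlower),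
    le_antisymm (Nat.sInf_le hs) (le_csInf ⟨k, hs⟩ fun j hj => hlower j hj.rainbowConnected)⟩

end Rainbow

namespace BalancedTernary

def stepInt (p : ℕ × Bool) : ℤ := if p.2 then 3 ^ p.1 else -3 ^ p.1

def shift (p : ℕ × Bool) : ℕ × Bool := (p.1 + 1, p.2)

lemma abs_stepInt (p : ℕ × Bool) : |stepInt p| = 3 ^ p.1 := by
  unfold stepInt; split_ifs <;> simp

lemma stepInt_shift (p : ℕ × Bool) : stepInt (shift p) = 3 * stepInt p := by
  unfold stepInt shift; split_ifs <;> ring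

lemma cast_stepInt (N : ℕ) (p : ℕ × Bool) : ((stepInt p : ℤ) : ZMod N) = stepVal N 3 p := by
  unfold stepInt stepVal; split_ifs <;> simp

lemma cast_sum_map_stepInt (N : ℕ) (l : List (ℕ × Bool)) :
    (((l.map stepInt).sum : ℤ) : ZMod N) = (l.map (stepVal N 3)).sum := by
  simp [Int.cast_list_sum, Function.comp_def, cast_stepInt]

lemma exists_balanced_digit (y : ℤ) : ∃ a d : ℤ, (d = -1 ∨ d = 0 ∨ d = 1) ∧ y = 3 * a + d :=
  ⟨(y - ((y + 1) % 3 - 1)) / 3, (y + 1) % 3 - 1, by omega, by omega⟩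

/-- The nonzero digits of the balanced ternary expansion of `y` modulo `r * 3 ^ m`, a digit `±1` at
position `i` recorded as the step `(i, ±)`; for `r = 2` the leading digit is `y` read modulo `2`. -/
def digits (r : ℕ) : ℕ → ℤ → List (ℕ × Bool)
  | 0, y => if r = 2 ∧ y % 2 = 1 then [(0, true)] else []
  | m + 1, y =>
    let d := (y + 1) % 3 - 1
    (if d = 0 then [] else [(0, decide (d = 1))]) ++ (digits r m ((y - d) / 3)).map shift

def weight (r m : ℕ) (y : ℤ) : ℕ := (digits r m y).length

variable {r m : ℕ}

lemma digits_succ {y a d : ℤ} (hd : d = -1 ∨ d = 0 ∨ d = 1) (hy : y = 3 * a + d) :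
    digits r (m + 1) y =
      (if d = 0 then [] else [(0, decide (d = 1))]) ++ (digits r m a).map shift := by
  have hd' : (y + 1) % 3 - 1 = d := by omega
  have ha : (y - d) / 3 = a := by omega
  simp only [digits, hd', ha]

lemma weight_succ {y a d : ℤ} (hd : d = -1 ∨ d = 0 ∨ d = 1) (hy : y = 3 * a + d) :
    weight r (m + 1) y = weight r m a + d.natAbs := by
  rw [weight, digits_succ hd hy, weight]
  rcases hd with rfl | rfl | rfl <;> simp

lemma weight_zero : weight r m 0 = 0 := by
  induction m with
  | zero => simp [weight, digits]
  | succ m ih => rw [weight_succ (a := 0) (d := 0) (by simp) (by simp), ih]; rfl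

lemma weight_congr (hr : r = 1 ∨ r = 2) {y z : ℤ} (h : y ≡ z [ZMOD r * 3 ^ m]) :
    weight r m y = weight r m z := by
  induction m generalizing y z with
  | zero =>
    rcases hr with rfl | rfl
    · simp [weight, digits]
    · have : y % 2 = z % 2 := by simpa [Int.ModEq] using h
      simp [weight, digits, this]
  | succ m ih =>
    obtain ⟨a, d, hd, rfl⟩ := exists_balanced_digit y
    obtain ⟨k, hk⟩ := Int.modEq_iff_dvd.mp h
    have hz : z = 3 * (a + r * 3 ^ m * k) + d := by linear_combination hk
    rw [weight_succ hd rfl, weight_succ hd hz,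
      ih (y := a) (z := a + r * 3 ^ m * k) (Int.modEq_iff_dvd.mpr ⟨k, by ring⟩)]

lemma weight_neg (y : ℤ) : weight r m (-y) = weight r m y := by
  induction m generalizing y with
  | zero => simp [weight, digits, Int.neg_emod_two]
  | succ m ih =>
    obtain ⟨a, d, hd, rfl⟩ := exists_balanced_digit y
    rw [weight_succ hd rfl, weight_succ (a := -a) (d := -d) (by omega) (by ring), ih,
      Int.natAbs_neg]

lemma weight_add_three_pow_le (y : ℤ) (i : ℕ) : weight r m (y + 3 ^ i) ≤ weight r m y + 1 := by
  induction m generalizing y i with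
  | zero =>
    simp only [weight, digits]
    split_ifs <;> simp
  | succ m ih =>
    obtain ⟨a, d, hd, rfl⟩ := exists_balanced_digit y
    rw [weight_succ hd rfl]
    cases i with
    | zero =>
      rcases hd with rfl | rfl | rfl
      · rw [weight_succ (a := a) (d := 0) (by simp) (by ring)]; omega
      · rw [weight_succ (a := a) (d := 1) (by simp) (by ring)]; simp
      · rw [weight_succ (a := a + 1) (d := -1) (by simp) (by ring)]
        simpa using ih a 0
    | succ i =>
      rw [weight_succ (a := a + 3 ^ i) hd (by ring)]
      have := ih a i
      omega

lemma weight_add_stepInt_le (y : ℤ) (p : ℕ × Bool) :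
    weight r m (y + stepInt p) ≤ weight r m y + 1 := by
  rcases p with ⟨i, _ | _⟩
  · have h := weight_add_three_pow_le (r := r) (m := m) (-y) i
    rwa [← weight_neg, neg_add, neg_neg, weight_neg, ← sub_eq_add_neg] at h
  · exact weight_add_three_pow_le y i

lemma sum_digits_modEq (hr : r = 1 ∨ r = 2) (y : ℤ) :
    ((digits r m y).map stepInt).sum ≡ y [ZMOD r * 3 ^ m] := by
  induction m generalizing y with
  | zero =>
    rcases hr with rfl | rfl
    · simp [Int.modEq_one]
    · simp only [digits, Int.ModEq]
      split_ifs with h <;> simp only [true_and] at h <;> simp [stepInt] <;> omega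
  | succ m ih =>
    obtain ⟨a, d, hd, rfl⟩ := exists_balanced_digit y
    have hsum : ((digits r (m + 1) (3 * a + d)).map stepInt).sum =
        3 * ((digits r m a).map stepInt).sum + d := by
      rw [digits_succ hd rfl, List.map_append, List.sum_append, List.map_map, Function.comp_def]
      simp only [stepInt_shift, List.sum_map_mul_left]
      rcases hd with rfl | rfl | rfl <;> simp [stepInt] <;> ring
    rw [hsum, pow_succ, mul_comm _ 3, ← mul_assoc, mul_comm _ 3, mul_assoc]
    exact ((ih a).mul_left' (c := 3)).add_right d

lemma digits_fst_lt {y : ℤ} {p : ℕ × Bool} (hp : p ∈ digits r m y) : p.1 < m + (r - 1) := by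
  induction m generalizing y p with
  | zero =>
    simp only [digits] at hp
    split_ifs at hp with h
    · simp [List.mem_singleton.mp hp, h.1]
    · simp at hp
  | succ m ih =>
    obtain ⟨a, d, hd, rfl⟩ := exists_balanced_digit y
    rw [digits_succ hd rfl] at hp
    rcases List.mem_append.mp hp with hp | hp
    · split_ifs at hp <;> simp_all
    · obtain ⟨q, hq, rfl⟩ := List.mem_map.mp hp
      have := ih hq
      simp only [shift]
      omega

lemma nodup_map_fst_digits (y : ℤ) : ((digits r m y).map Prod.fst).Nodup := by
  induction m generalizing y with
  | zero => simp only [digits]; split_ifs <;> simp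
  | succ m ih =>
    obtain ⟨a, d, hd, rfl⟩ := exists_balanced_digit y
    have hshift : ((digits r m a).map shift).map Prod.fst =
        ((digits r m a).map Prod.fst).map (· + 1) := by
      simp [shift, Function.comp_def]
    rw [digits_succ hd rfl, List.map_append, hshift]
    refine List.Nodup.append ?_ ((ih a).map (fun _ _ => Nat.succ.inj)) ?_
    · split_ifs <;> simp
    · split_ifs <;> simp

lemma weight_eq_of_two_mul_add_one (hr : r = 1 ∨ r = 2) {y : ℤ}
    (hy : 2 * y + 1 = 3 ^ (m + (r - 1))) : weight r m y = m + (r - 1) := by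
  induction m generalizing y with
  | zero =>
    rcases hr with rfl | rfl
    · simp [weight, digits]
    · obtain rfl : y = 1 := by simp at hy; omega
      simp [weight, digits]
  | succ m ih =>
    obtain ⟨P, hP⟩ : ∃ P : ℤ, 3 ^ (m + (r - 1)) = P := ⟨_, rfl⟩
    rw [add_right_comm, pow_succ, hP] at hy
    rw [weight_succ (a := (y - 1) / 3) (d := 1) (by simp) (by omega), ih (by omega)]
    simp only [Int.natAbs_one]
    omega

end BalancedTernary

open BalancedTernary

section RecCirc

variable {N : ℕ}

lemma stepVal_not (i : ℕ) (b : Bool) : stepVal N 3 (i, !b) = -stepVal N 3 (i, b) := by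
  cases b <;> simp [stepVal]

lemma recCirc_adj_iff {u v : ZMod N} :
    (recCirc N 3).Adj u v ↔ u ≠ v ∧ ∃ p : ℕ × Bool, p.1 < Nat.clog 3 N ∧ v = u + stepVal N 3 p := by
  simp only [recCirc, circulantGraph_adj, Set.mem_ofPred_eq, Nat.cast_ofNat]
  refine and_congr_right fun _ => ⟨?_, ?_⟩
  · rintro (⟨i, hi, h⟩ | ⟨i, hi, h⟩)
    · exact ⟨(i, false), hi, by simp [stepVal, ← h]⟩
    · exact ⟨(i, true), hi, by simp [stepVal, ← h]⟩
  · rintro ⟨⟨i, _ | _⟩, hi, rfl⟩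
    · exact Or.inl ⟨i, hi, by simp [stepVal]⟩
    · exact Or.inr ⟨i, hi, by simp [stepVal]⟩

lemma three_pow_lt_of_lt_clog {i : ℕ} (hi : i < Nat.clog 3 N) : 3 ^ i < N := by
  by_contra! h
  exact hi.not_ge ((Nat.clog_le_iff_le_pow (by norm_num)).mpr h)

lemma stepVal_ne_zero {p : ℕ × Bool} (hp : p.1 < Nat.clog 3 N) : stepVal N 3 p ≠ 0 := by
  rw [← cast_stepInt, Ne, ZMod.intCast_zmod_eq_zero_iff_dvd]
  intro hdvd
  have hlt : |stepInt p| < N := by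
    rw [abs_stepInt]; exact_mod_cast three_pow_lt_of_lt_clog hp
  have h3 := abs_stepInt p
  rw [Int.eq_zero_of_abs_lt_dvd hdvd hlt, abs_zero] at h3
  exact absurd h3.symm (by positivity)

lemma recCirc_adj_add_stepVal (u : ZMod N) {p : ℕ × Bool} (hp : p.1 < Nat.clog 3 N) :
    (recCirc N 3).Adj u (u + stepVal N 3 p) :=
  recCirc_adj_iff.mpr ⟨by simpa using stepVal_ne_zero hp, p, hp, rfl⟩

noncomputable def jumpIndex (N : ℕ) (x : ZMod N) : ℕ := sInf {i | ∃ b, stepVal N 3 (i, b) = x}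

lemma jumpIndex_neg (x : ZMod N) : jumpIndex N (-x) = jumpIndex N x := by
  have (i : ℕ) : (∃ b, stepVal N 3 (i, b) = -x) ↔ ∃ b, stepVal N 3 (i, b) = x :=
    ⟨fun ⟨b, h⟩ => ⟨!b, by rw [stepVal_not, h, neg_neg]⟩,
      fun ⟨b, h⟩ => ⟨!b, by rw [stepVal_not, h]⟩⟩
  simp only [jumpIndex, this]

lemma jumpIndex_stepVal_le (i : ℕ) (b : Bool) : jumpIndex N (stepVal N 3 (i, b)) ≤ i :=
  Nat.sInf_le ⟨b, rfl⟩

/-- The edge `{u, u ± 3 ^ i}` gets color `i`; for `N = r * 3 ^ m` the exponent is unique by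
`fst_eq_of_stepVal_eq`. -/
noncomputable def jumpColoring (N : ℕ) : Sym2 (ZMod N) → ℕ :=
  Sym2.lift ⟨fun u v => jumpIndex N (v - u), fun u v => by
    change jumpIndex N (v - u) = jumpIndex N (u - v); rw [← neg_sub, jumpIndex_neg]⟩

lemma jumpColoring_mk (u v : ZMod N) : jumpColoring N s(u, v) = jumpIndex N (v - u) := rfl

lemma jumpColoring_lt_clog {e : Sym2 (ZMod N)} (he : e ∈ (recCirc N 3).edgeSet) :
    jumpColoring N e < Nat.clog 3 N := by
  induction e using Sym2.ind with
  | _ u v =>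
    obtain ⟨-, ⟨i, b⟩, hi, rfl⟩ := recCirc_adj_iff.mp ((mem_edgeSet _).mp he)
    rw [jumpColoring_mk, add_sub_cancel_left]
    exact (jumpIndex_stepVal_le i b).trans_lt hi

variable {r m : ℕ}

lemma clog_three_mul_three_pow (hr : r = 1 ∨ r = 2) : Nat.clog 3 (r * 3 ^ m) = m + (r - 1) := by
  rcases hr with rfl | rfl
  · simp
  · have hle : Nat.clog 3 (2 * 3 ^ m) ≤ m + 1 :=
      (Nat.clog_le_iff_le_pow (by norm_num)).mpr (by rw [pow_succ]; omega)
    have hgt : ¬ Nat.clog 3 (2 * 3 ^ m) ≤ m := fun h => by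
      have := (Nat.clog_le_iff_le_pow (by norm_num)).mp h
      have : 0 < 3 ^ m := by positivity
      omega
    omega

lemma two_mul_three_pow_le (hr : r = 1 ∨ r = 2) {i : ℕ} (hi : i < m + (r - 1)) :
    2 * 3 ^ i ≤ r * 3 ^ m := by
  rcases hr with rfl | rfl
  · have : 3 ^ (i + 1) ≤ 3 ^ m := Nat.pow_le_pow_right (by norm_num) (by omega)
    rw [pow_succ] at this
    omega
  · have : 3 ^ i ≤ 3 ^ m := Nat.pow_le_pow_right (by norm_num) (by omega)
    omega

lemma fst_eq_of_stepVal_eq (hr : r = 1 ∨ r = 2) {p q : ℕ × Bool} (hp : p.1 < m + (r - 1))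
    (hq : q.1 < m + (r - 1)) (h : stepVal (r * 3 ^ m) 3 p = stepVal (r * 3 ^ m) 3 q) :
    p.1 = q.1 := by
  by_contra hne
  have hsum : 3 ^ p.1 + 3 ^ q.1 < r * 3 ^ m := by
    rcases lt_or_gt_of_ne hne with hpq | hpq
    · have := Nat.pow_lt_pow_right (a := 3) (by norm_num) hpq
      have := two_mul_three_pow_le hr hq
      omega
    · have := Nat.pow_lt_pow_right (a := 3) (by norm_num) hpq
      have := two_mul_three_pow_le hr hp
      omega
  rw [← cast_stepInt, ← cast_stepInt, ZMod.intCast_eq_intCast_iff] at h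
  have hlt : |stepInt q - stepInt p| < ((r * 3 ^ m : ℕ) : ℤ) := by
    calc |stepInt q - stepInt p| ≤ |stepInt q| + |stepInt p| := abs_sub _ _
      _ = 3 ^ q.1 + 3 ^ p.1 := by rw [abs_stepInt, abs_stepInt]
      _ < ((r * 3 ^ m : ℕ) : ℤ) := by rw [add_comm]; exact_mod_cast hsum
  have hpow := congrArg abs (sub_eq_zero.mp (Int.eq_zero_of_abs_lt_dvd h.dvd hlt))
  rw [abs_stepInt, abs_stepInt] at hpow
  exact hne (Nat.pow_right_injective (a := 3) (by norm_num) (by exact_mod_cast hpow.symm))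

lemma jumpIndex_stepVal (hr : r = 1 ∨ r = 2) {p : ℕ × Bool} (hp : p.1 < m + (r - 1)) :
    jumpIndex (r * 3 ^ m) (stepVal (r * 3 ^ m) 3 p) = p.1 := by
  obtain ⟨b, hb⟩ := Nat.sInf_mem (⟨p.1, p.2, rfl⟩ :
    {i | ∃ b, stepVal (r * 3 ^ m) 3 (i, b) = stepVal (r * 3 ^ m) 3 p}.Nonempty)
  exact fst_eq_of_stepVal_eq hr ((jumpIndex_stepVal_le p.1 p.2).trans_lt hp) hp hb

lemma exists_walk_of_steps (hr : r = 1 ∨ r = 2) (l : List (ℕ × Bool))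
    (hl : ∀ p ∈ l, p.1 < m + (r - 1)) (u : ZMod (r * 3 ^ m)) :
    ∃ w : (recCirc (r * 3 ^ m) 3).Walk u (u + (l.map (stepVal (r * 3 ^ m) 3)).sum),
      w.length = l.length ∧ w.edges.map (jumpColoring (r * 3 ^ m)) = l.map Prod.fst := by
  induction l generalizing u with
  | nil => exact ⟨Walk.nil.copy rfl (by simp), by simp, by simp⟩
  | cons p t ih =>
    have hp := hl p List.mem_cons_self
    obtain ⟨w, hlen, hcol⟩ := ih (fun q hq => hl q (List.mem_cons_of_mem p hq)) _
    have hadj := recCirc_adj_add_stepVal u (clog_three_mul_three_pow hr ▸ hp)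
    refine ⟨(Walk.cons hadj w).copy rfl (by simp [add_assoc]), by simp [hlen], ?_⟩
    simp [hcol, jumpColoring_mk, jumpIndex_stepVal hr hp]

lemma weight_le_length (hr : r = 1 ∨ r = 2) {u v : ZMod (r * 3 ^ m)}
    (w : (recCirc (r * 3 ^ m) 3).Walk u v) {y : ℤ} (hy : (y : ZMod (r * 3 ^ m)) = v - u) :
    weight r m y ≤ w.length := by
  induction w generalizing y with
  | nil =>
    rw [sub_self, ← Int.cast_zero, ZMod.intCast_eq_intCast_iff] at hy
    rw [weight_congr hr (by exact_mod_cast hy), weight_zero, Walk.length_nil]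
  | cons hadj w ih =>
    obtain ⟨-, p, -, rfl⟩ := recCirc_adj_iff.mp hadj
    have hstep := weight_add_stepInt_le (r := r) (m := m) (y - stepInt p) p
    have hrest := ih (y := y - stepInt p) (by rw [Int.cast_sub, hy, cast_stepInt]; ring)
    rw [sub_add_cancel] at hstep
    rw [Walk.length_cons]
    omega

theorem recCirc_strongRainbowConnected (hr : r = 1 ∨ r = 2) :
    StrongRainbowConnected (recCirc (r * 3 ^ m) 3) (m + (r - 1)) := by
  refine ⟨jumpColoring _, fun e he => clog_three_mul_three_pow hr ▸ jumpColoring_lt_clog he,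
    fun u v => ?_⟩
  set y : ℤ := (v - u).cast
  obtain ⟨w, hlen, hcol⟩ := exists_walk_of_steps hr (digits r m y) (fun p => digits_fst_lt) u
  have hend : u + ((digits r m y).map (stepVal (r * 3 ^ m) 3)).sum = v := by
    rw [← cast_sum_map_stepInt, (ZMod.intCast_eq_intCast_iff _ _ _).mpr
      (by exact_mod_cast sum_digits_modEq hr y), ZMod.intCast_zmod_cast, add_sub_cancel]
  set w' := w.copy rfl hend
  have hdist : w'.length = (recCirc (r * 3 ^ m) 3).dist u v := by
    obtain ⟨q, hq⟩ := w'.reachable.exists_walk_length_eq_dist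
    refine le_antisymm ?_ (dist_le w')
    rw [← hq, Walk.length_copy, hlen]
    exact weight_le_length hr q (ZMod.intCast_zmod_cast _)
  refine ⟨w', w'.isPath_of_length_eq_dist hdist, hdist, ?_⟩
  rw [Walk.edges_copy, hcol]
  exact nodup_map_fst_digits y

end RecCirc

theorem rc_src_recCirc_three_general (r m : ℕ) (hr : r = 1 ∨ r = 2) :
    rc (recCirc (r * 3 ^ m) 3) = m + r / 2 ∧
    src (recCirc (r * 3 ^ m) 3) = m + r / 2 := by
  have hM : m + r / 2 = m + (r - 1) := by rcases hr with rfl | rfl <;> rfl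
  obtain ⟨t, ht⟩ : ∃ t : ℤ, 2 * t + 1 = 3 ^ (m + (r - 1)) := by
    obtain ⟨t, ht⟩ := Odd.pow (n := m + (r - 1)) (by decide : Odd (3 : ℤ))
    exact ⟨t, ht.symm⟩
  rw [hM]
  refine rc_eq_and_src_eq_of_le_length (recCirc_strongRainbowConnected hr) (u := 0)
    (v := (t : ZMod (r * 3 ^ m))) fun w => ?_
  calc m + (r - 1) = weight r m t := (weight_eq_of_two_mul_add_one hr ht).symm
    _ ≤ w.length := weight_le_length hr w (sub_zero _).symm

/-- rc(G(r·3^m,3)) = src(G(r·3^m,3)) = m + ⌊r/2⌋ for r ∈ {1,2}. -/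
theorem rc_src_recCirc_three (r m : ℕ) (hr : r = 1 ∨ r = 2) (hm : 1 ≤ m) :
    rc (recCirc (r * 3 ^ m) 3) = m + r / 2 ∧
    src (recCirc (r * 3 ^ m) 3) = m + r / 2 :=
  rc_src_recCirc_three_general r m hr
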